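/- arXiv:2502.18797 — 2 statements merged into one kernel-verified Lean document; each statement's English description precedes it below -/
import Mathlib

section
/- Let G be a connected plane graph with minimum degree at least 3 that contains no cycle of length 4, no cycle of length 7, no cycle of length 9, and no 5-cycle normally adjacent to a 3-cycle. Then the boundary walk of every 6-face of G consists either of a single 6-cycle or of two 3-cycles (meeting at a cut vertex). -/
namespace Paper

open SimpleGraph

variable {V : Type*}

/-- The fixed-point-free involution on darts reversing each dart. -/
def dartFlip (G : SimpleGraph V) : Equiv.Perm G.Dart :=
  ⟨SimpleGraph.Dart.symm, SimpleGraph.Dart.symm,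
    fun d => SimpleGraph.Dart.symm_symm d, fun d => SimpleGraph.Dart.symm_symm d⟩

/-- A combinatorial embedding (rotation system) of a simple graph: a permutation of the
darts whose cycles are exactly the sets of darts emanating from a common vertex. -/
structure PlaneEmbedding (G : SimpleGraph V) where
  rot : Equiv.Perm G.Dart
  fst_rot : ∀ d : G.Dart, (rot d).fst = d.fst
  rot_cyclic : ∀ d e : G.Dart, d.fst = e.fst → rot.SameCycle d e

/-- The face permutation of a combinatorial embedding; its orbits are the (boundary walks
of the) faces of the embedding. -/
def PlaneEmbedding.facePerm {G : SimpleGraph V} (E : PlaneEmbedding G) : Equiv.Perm G.Dart :=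
  E.rot * dartFlip G

/-- The face (as its set of boundary darts, i.e. the orbit of the face permutation)
containing a given dart. -/
def faceOf {G : SimpleGraph V} (E : PlaneEmbedding G) (d : G.Dart) : Set G.Dart :=
  {e | E.facePerm.SameCycle d e}

/-- The length of the boundary walk of the face containing a given dart; a `k`-face is a
face whose boundary walk has length `k`, i.e. whose dart-orbit has size `k`. -/
noncomputable def faceSize {G : SimpleGraph V} (E : PlaneEmbedding G) (d : G.Dart) : ℕ :=
  (faceOf E d).ncard

/-- The number of faces of the embedding lying in a given connected component. -/
noncomputable def componentFaceCount {G : SimpleGraph V} (E : PlaneEmbedding G)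
    (c : G.ConnectedComponent) : ℕ :=
  Nat.card (Quotient (Setoid.comap
    (Subtype.val : {d : G.Dart // G.connectedComponentMk d.fst = c} → G.Dart)
    (Equiv.Perm.SameCycle.setoid E.facePerm)))

/-- The embedding is plane (genus zero): Euler's formula `V - E + F = 2` holds on each
connected component containing an edge (stated as `2V + 2F = #darts + 4`, using that the
number of darts is twice the number of edges). -/
def PlaneEmbedding.IsPlane {G : SimpleGraph V} (E : PlaneEmbedding G) : Prop :=
  ∀ c : G.ConnectedComponent, (∃ d : G.Dart, G.connectedComponentMk d.fst = c) →
    2 * {v : V | G.connectedComponentMk v = c}.ncard + 2 * componentFaceCount E c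
      = {d : G.Dart | G.connectedComponentMk d.fst = c}.ncard + 4

/-- `G` is a planar graph: it admits a plane (genus-zero) combinatorial embedding. -/
def IsPlanar (G : SimpleGraph V) : Prop :=
  ∃ E : PlaneEmbedding G, E.IsPlane

/-- `G` has no cycle of length `n`. -/
def NoCycleLen (G : SimpleGraph V) (n : ℕ) : Prop :=
  ∀ (v : V) (c : G.Walk v v), c.IsCycle → c.length ≠ n

/-- Two cycles (given as closed walks) are normally adjacent: their intersection is
isomorphic to `K₂`, i.e. they share exactly one edge together with its two endpoints. -/
def NormAdjWalks (G : SimpleGraph V) {a b : V} (c₁ : G.Walk a a) (c₂ : G.Walk b b) : Prop :=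
  ∃ x y : V, x ≠ y ∧ s(x, y) ∈ c₁.edges ∧ s(x, y) ∈ c₂.edges ∧
    (∀ z : V, (z ∈ c₁.support ∧ z ∈ c₂.support) ↔ (z = x ∨ z = y))

/-- `G` has no `5`-cycle normally adjacent to a `3`-cycle. -/
def No5CycleNormAdj3 (G : SimpleGraph V) : Prop :=
  ∀ (a b : V) (c₁ : G.Walk a a) (c₂ : G.Walk b b),
    c₁.IsCycle → c₁.length = 5 → c₂.IsCycle → c₂.length = 3 →
      ¬ NormAdjWalks G c₁ c₂

/-- `d` lists the boundary darts of a face in order, and this boundary is the closed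
walk `v 0, v 1, …, v (n-1), v 0`. -/
def FaceTraversal {G : SimpleGraph V} (E : PlaneEmbedding G) {n : ℕ}
    (v : ZMod n → V) (d : ZMod n → G.Dart) : Prop :=
  (∀ i, (d i).toProd = (v i, v (i + 1))) ∧ ∀ i, E.facePerm (d i) = d (i + 1)

/-- The cycle `v 0, v 1, …, v (n-1), v 0` (with distinct vertices) bounds a face of the
embedding (traversed in one of the two possible directions). -/
def CycleBoundsFace {G : SimpleGraph V} (E : PlaneEmbedding G) {n : ℕ}
    (v : ZMod n → V) : Prop :=
  Function.Injective v ∧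
    ((∃ d, FaceTraversal E v d) ∨ (∃ d, FaceTraversal E (fun i => v (-i)) d))

/-- The `i`-th vertex of the boundary walk of the face containing the dart `d0`. -/
def boundaryVert {G : SimpleGraph V} (E : PlaneEmbedding G) (d0 : G.Dart) (i : ℕ) : V :=
  ((E.facePerm ^ i) d0).fst

/-- The faces containing the darts `d1`, `d2` are adjacent: their boundaries share at
least one edge. -/
def FacesAdjacent {G : SimpleGraph V} (E : PlaneEmbedding G) (d1 d2 : G.Dart) : Prop :=
  ∃ e1 e2 : G.Dart, E.facePerm.SameCycle d1 e1 ∧ E.facePerm.SameCycle d2 e2 ∧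
    e1.edge = e2.edge

/-- The set of vertices on the boundary of the face containing the dart `d`. -/
def faceVerts {G : SimpleGraph V} (E : PlaneEmbedding G) (d : G.Dart) : Set V :=
  {x | ∃ e : G.Dart, E.facePerm.SameCycle d e ∧ e.fst = x}

/-- The set of edges on the boundary of the face containing the dart `d`. -/
def faceEdges {G : SimpleGraph V} (E : PlaneEmbedding G) (d : G.Dart) : Set (Sym2 V) :=
  {s | ∃ e : G.Dart, E.facePerm.SameCycle d e ∧ e.edge = s}

section Configs

variable [Fintype V]

/-- Configuration (1): a `10`-cycle bounding a face together with a `3`-cycle bounding a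
face, normally adjacent to it along one edge, all eleven vertices having degree `3`. -/
def Config1 (G : SimpleGraph V) [DecidableRel G.Adj] (E : PlaneEmbedding G) : Prop :=
  ∃ (v : ZMod 10 → V) (w : ZMod 3 → V) (u : V),
    CycleBoundsFace E v ∧ CycleBoundsFace E w ∧
    ({w 0, w 1, w 2} : Set V) = {v 0, v 1, u} ∧ u ∉ Set.range v ∧
    (∀ i, G.degree (v i) = 3) ∧ G.degree u = 3

/-- Configuration (2): two vertex-disjoint `10`-cycles `x₁…x₁₀` and `y₁…y₁₀` (indexed here
from `0`), each bounding a face, with edges `x₃y₃` and `x₁₀y₁₀`; all `xᵢ` have degree `3`,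
`y₃` and `y₁₀` have degree `4`, the other `yᵢ` have degree `3`. -/
def Config2 (G : SimpleGraph V) [DecidableRel G.Adj] (E : PlaneEmbedding G) : Prop :=
  ∃ x y : ZMod 10 → V,
    CycleBoundsFace E x ∧ CycleBoundsFace E y ∧
    Set.range x ∩ Set.range y = ∅ ∧
    G.Adj (x 2) (y 2) ∧ G.Adj (x 9) (y 9) ∧
    (∀ i, G.degree (x i) = 3) ∧
    G.degree (y 2) = 4 ∧ G.degree (y 9) = 4 ∧
    (∀ i, i ≠ 2 → i ≠ 9 → G.degree (y i) = 3)

/-- Configuration (3): an `8`-cycle bounding a face and a `5`-cycle bounding a face that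
are normally adjacent (sharing exactly one edge and its endpoints), all eleven vertices
having degree `3`. -/
def Config3 (G : SimpleGraph V) [DecidableRel G.Adj] (E : PlaneEmbedding G) : Prop :=
  ∃ (a : ZMod 8 → V) (b : ZMod 5 → V),
    CycleBoundsFace E a ∧ CycleBoundsFace E b ∧
    Set.range a ∩ Set.range b = {a 0, a 1} ∧
    (∃ j : ZMod 5, (b j = a 0 ∧ b (j + 1) = a 1) ∨ (b j = a 1 ∧ b (j + 1) = a 0)) ∧
    (∀ i, G.degree (a i) = 3) ∧ (∀ j, G.degree (b j) = 3)

end Configs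

open Classical in
/-- The function resulting from the operation `Delete_[u](G, f)`: every neighbour of `u`
loses one unit. -/
noncomputable def deleteFun (G : SimpleGraph V) (u : V) (f : V → ℤ) : V → ℤ :=
  fun v => if G.Adj u v then f v - 1 else f v

open Classical in
/-- The function resulting from the operation `DeleteSave_[u; w](G, f)`: every neighbour
of `u` except `w` loses one unit. -/
noncomputable def deleteSaveFun (G : SimpleGraph V) (u w : V) (f : V → ℤ) : V → ℤ :=
  fun v => if G.Adj u v ∧ v ≠ w then f v - 1 else f v

/-- All vertices of the subgraph of `G` induced on `S` can be removed by a sequence of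
legal applications of the `Delete` and `DeleteSave` operations, starting from the value
function `f`. -/
inductive WeaklyReducible (G : SimpleGraph V) : Set V → (V → ℤ) → Prop
  | empty (f : V → ℤ) : WeaklyReducible G ∅ f
  | delete (S : Set V) (f : V → ℤ) (u : V) (hu : u ∈ S)
      (hnn : ∀ v ∈ S \ {u}, 0 ≤ deleteFun G u f v)
      (h : WeaklyReducible G (S \ {u}) (deleteFun G u f)) : WeaklyReducible G S f
  | deleteSave (S : Set V) (f : V → ℤ) (u w : V) (hu : u ∈ S) (hw : w ∈ S \ {u})
      (hadj : G.Adj u w) (hlt : f w < f u)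
      (hnn : ∀ v ∈ S \ {u}, 0 ≤ deleteSaveFun G u w f v)
      (h : WeaklyReducible G (S \ {u}) (deleteSaveFun G u w f)) : WeaklyReducible G S f

/-- `G` is weakly `d`-degenerate: all its vertices can be removed by a sequence of legal
applications of the `Delete` and `DeleteSave` operations, starting from the constant
function of value `d`. -/
def WeaklyDegenerate (G : SimpleGraph V) (d : ℤ) : Prop :=
  WeaklyReducible G Set.univ (fun _ => d)

/-- The canonical cover of `G` with `s = 2`: two disjoint copies of `G`, on vertex set
`V × Fin 2`, with `(u, i)` adjacent to `(v, j)` iff `uv ∈ E(G)` and `i = j`. -/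
def canonicalCover2 (G : SimpleGraph V) : SimpleGraph (V × Fin 2) where
  Adj a b := G.Adj a.1 b.1 ∧ a.2 = b.2
  symm := ⟨fun _ _ h => ⟨h.1.symm, h.2.symm⟩⟩
  loopless := ⟨fun a h => G.loopless.irrefl a.1 h.1⟩

/-- `T` is a strictly `f`-degenerate transversal-candidate set: every nonempty subgraph
`K` of the induced subgraph `H[T]` has a vertex `x` with `deg_K x < f x`. -/
def StrictlyFDegenerateOn {W : Type*} (H : SimpleGraph W) (f : W → ℕ) (T : Set W) : Prop :=
  ∀ K : H.Subgraph, K.verts ⊆ T → K.verts.Nonempty →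
    ∃ x ∈ K.verts, Nat.card (K.neighborSet x) < f x

end Paper

/-!
The orbit of the face permutation through `d0` consists of exactly six darts, so the boundary
walk is a closed walk of length `6` that repeats no dart. As every vertex has degree at least
`2`, the rotation fixes no dart, so the walk never turns back along the edge it just used.
Such a walk can revisit a vertex only at distance `3`, and then it splits into two triangles
sharing that vertex.
-/

namespace Paper

open SimpleGraph Function

variable {V : Type*} {G : SimpleGraph V}

theorem faceOf_eq_orbit (E : PlaneEmbedding G) (d : G.Dart) :
    faceOf E d = MulAction.orbit (Subgroup.zpowers E.facePerm) d := by
  ext e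
  constructor
  · rintro ⟨i, rfl⟩
    exact ⟨⟨_, i, rfl⟩, rfl⟩
  · rintro ⟨⟨_, i, rfl⟩, rfl⟩
    exact ⟨i, rfl⟩

theorem minimalPeriod_facePerm [Finite G.Dart] (E : PlaneEmbedding G) (d : G.Dart) :
    minimalPeriod E.facePerm d = faceSize E d := by
  classical
  have := Fintype.ofFinite G.Dart
  rw [faceSize, faceOf_eq_orbit, Set.ncard_eq_toFinset_card', Set.toFinset_card]
  convert MulAction.minimalPeriod_eq_card (a := E.facePerm) (b := d)
  rfl

theorem PlaneEmbedding.facePerm_apply_fst (E : PlaneEmbedding G) (d : G.Dart) :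
    (E.facePerm d).fst = d.snd :=
  E.fst_rot d.symm

/-- If the face permutation sent `d` to its reverse, the rotation would fix `d.symm`, so by
cyclicity of the rotation `d.snd` would have no other neighbour. -/
theorem PlaneEmbedding.facePerm_ne_symm (E : PlaneEmbedding G) {d : G.Dart}
    [Fintype (G.neighborSet d.snd)] (hdeg : 1 < G.degree d.snd) : E.facePerm d ≠ d.symm := by
  intro hd
  have hfix : IsFixedPt E.rot d.symm := hd
  obtain ⟨x, hx, hne⟩ := Finset.exists_mem_ne hdeg d.fst
  have hsame := E.rot_cyclic d.symm ⟨(d.snd, x), (G.mem_neighborFinset _ _).1 hx⟩ rfl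
  exact hne (congrArg (fun e : G.Dart => e.snd) (hsame.eq_of_left hfix)).symm

theorem boundaryVert_succ (E : PlaneEmbedding G) (d : G.Dart) (i : ℕ) :
    boundaryVert E d (i + 1) = ((E.facePerm ^ i) d).snd := by
  rw [boundaryVert, pow_succ', Equiv.Perm.mul_apply, E.facePerm_apply_fst]

theorem toProd_facePerm_pow (E : PlaneEmbedding G) (d : G.Dart) (i : ℕ) :
    ((E.facePerm ^ i) d).toProd = (boundaryVert E d i, boundaryVert E d (i + 1)) := by
  rw [boundaryVert_succ]
  rfl

/-- The vertex sequence of the boundary walk of a `6`-face in a graph of minimum degree at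
least `2`; `mod_eq_of_eq_of_eq` says that no dart is traversed twice. -/
structure IsSixFaceWalk (v : ℕ → V) : Prop where
  periodic : ∀ i, v (i + 6) = v i
  ne_add_one : ∀ i, v i ≠ v (i + 1)
  ne_add_two : ∀ i, v i ≠ v (i + 2)
  mod_eq_of_eq_of_eq : ∀ i j, v i = v j → v (i + 1) = v (j + 1) → i % 6 = j % 6

namespace IsSixFaceWalk

variable {v : ℕ → V}

theorem ne_add_four (hv : IsSixFaceWalk v) (i : ℕ) : v i ≠ v (i + 4) := by
  rw [← hv.periodic i]
  exact (hv.ne_add_two (i + 4)).symm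

theorem ne_add_five (hv : IsSixFaceWalk v) (i : ℕ) : v i ≠ v (i + 5) := by
  rw [← hv.periodic i]
  exact (hv.ne_add_one (i + 5)).symm

/-- A repeated vertex at distance `3` splits the walk into two triangles; a repetition inside
either triangle would repeat a dart. -/
theorem nodup_of_eq_add_three (hv : IsSixFaceWalk v) {k : ℕ} (hk : v k = v (k + 3)) :
    [v k, v (k + 1), v (k + 2), v (k + 4), v (k + 5)].Nodup := by
  have h14 : v (k + 1) ≠ v (k + 4) := fun h => by
    have := hv.mod_eq_of_eq_of_eq k (k + 3) hk h
    omega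
  have h25 : v (k + 2) ≠ v (k + 5) := fun h => by
    have := hv.mod_eq_of_eq_of_eq (k + 2) (k + 5) h (by rw [hv.periodic, ← hk])
    omega
  simp only [List.nodup_cons, List.mem_cons, List.not_mem_nil, or_false, not_or,
    List.nodup_nil, and_true, not_false_eq_true]
  exact ⟨⟨hv.ne_add_one k, hv.ne_add_two k, hv.ne_add_four k, hv.ne_add_five k⟩,
    ⟨hv.ne_add_one _, h14, hv.ne_add_four _⟩, ⟨hv.ne_add_two _, h25⟩, hv.ne_add_one _⟩

theorem injective_of_ne_add_three (hv : IsSixFaceWalk v) (h3 : ∀ k < 3, v k ≠ v (k + 3)) :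
    Injective fun i : Fin 6 => v i := by
  have hne : ∀ i j, i < j → j < 6 → v i ≠ v j := by
    intro i j hij hj
    obtain ⟨d, rfl⟩ : ∃ d, j = i + d := ⟨j - i, by omega⟩
    obtain ⟨hd1, hd5⟩ : 1 ≤ d ∧ d ≤ 5 := by omega
    interval_cases d
    · exact hv.ne_add_one i
    · exact hv.ne_add_two i
    · exact h3 i (by omega)
    · exact hv.ne_add_four i
    · exact hv.ne_add_five i
  intro i j hij
  by_contra h
  rcases lt_or_gt_of_ne (Fin.val_ne_of_ne h) with hlt | hlt
  · exact hne i j hlt j.isLt hij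
  · exact hne j i hlt i.isLt hij.symm

theorem injective_or_exists_nodup (hv : IsSixFaceWalk v) :
    (Injective fun i : Fin 6 => v i) ∨
      ∃ k, v k = v (k + 3) ∧ [v k, v (k + 1), v (k + 2), v (k + 4), v (k + 5)].Nodup := by
  by_cases h : ∃ k < 3, v k = v (k + 3)
  · obtain ⟨k, -, hk⟩ := h
    exact Or.inr ⟨k, hk, hv.nodup_of_eq_add_three hk⟩
  · push Not at h
    exact Or.inl (hv.injective_of_ne_add_three h)

end IsSixFaceWalk

theorem isSixFaceWalk_boundaryVert [Fintype V] [DecidableRel G.Adj] (E : PlaneEmbedding G)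
    (hdeg : ∀ v, 1 < G.degree v) {d : G.Dart} (h6 : faceSize E d = 6) :
    IsSixFaceWalk (boundaryVert E d) := by
  have hperiod : minimalPeriod E.facePerm d = 6 := (minimalPeriod_facePerm E d).trans h6
  have hdart : ∀ i j, (E.facePerm ^ i) d = (E.facePerm ^ j) d → i % 6 = j % 6 := by
    intro i j h
    have hpos : 0 < minimalPeriod E.facePerm d := by omega
    rw [← hperiod]
    refine (iterate_eq_iterate_iff_of_lt_minimalPeriod (Nat.mod_lt _ hpos)
      (Nat.mod_lt _ hpos)).1 ?_
    rwa [iterate_mod_minimalPeriod_eq, iterate_mod_minimalPeriod_eq, Equiv.Perm.iterate_eq_pow,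
      Equiv.Perm.iterate_eq_pow]
  have hfix : (E.facePerm ^ 6) d = d := by
    rw [← Equiv.Perm.iterate_eq_pow, ← hperiod]
    exact iterate_minimalPeriod
  refine ⟨fun i => ?_, fun i => ?_, fun i => ?_, fun i j hi hj => ?_⟩
  · simp only [boundaryVert, pow_add, Equiv.Perm.mul_apply, hfix]
  · rw [boundaryVert_succ]
    exact ((E.facePerm ^ i) d).fst_ne_snd
  · intro h
    refine E.facePerm_ne_symm (d := (E.facePerm ^ i) d) (hdeg _) (Dart.ext _ _ ?_)
    rw [← Equiv.Perm.mul_apply, ← pow_succ', toProd_facePerm_pow, Dart.symm_toProd,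
      toProd_facePerm_pow, h]
    rfl
  · refine hdart i j (Dart.ext _ _ ?_)
    rw [toProd_facePerm_pow, toProd_facePerm_pow, hi, hj]

end Paper

open SimpleGraph

theorem statement8_general {V : Type*} [Fintype V] (G : SimpleGraph V) [DecidableRel G.Adj]
    (E : Paper.PlaneEmbedding G)
    (hmin : ∀ v : V, 3 ≤ G.degree v) :
    ∀ d0 : G.Dart, Paper.faceSize E d0 = 6 →
      (Function.Injective fun i : Fin 6 => Paper.boundaryVert E d0 i) ∨
      (∃ k : ℕ, Paper.boundaryVert E d0 k = Paper.boundaryVert E d0 (k + 3) ∧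
        [Paper.boundaryVert E d0 k, Paper.boundaryVert E d0 (k + 1),
         Paper.boundaryVert E d0 (k + 2), Paper.boundaryVert E d0 (k + 4),
         Paper.boundaryVert E d0 (k + 5)].Nodup) := by
  intro d0 h6
  have hdeg : ∀ v, 1 < G.degree v := fun v => lt_of_lt_of_le (by norm_num) (hmin v)
  exact (Paper.isSixFaceWalk_boundaryVert E hdeg h6).injective_or_exists_nodup

/-- The boundary walk of every 6-face consists of a single 6-cycle or of two
3-cycles meeting at a vertex. -/
theorem statement8 {V : Type*} [Fintype V] (G : SimpleGraph V) [DecidableRel G.Adj]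
    (hconn : G.Connected)
    (E : Paper.PlaneEmbedding G) (hE : E.IsPlane)
    (hmin : ∀ v : V, 3 ≤ G.degree v)
    (h4 : Paper.NoCycleLen G 4) (h7 : Paper.NoCycleLen G 7)
    (h9 : Paper.NoCycleLen G 9) (h53 : Paper.No5CycleNormAdj3 G) :
    ∀ d0 : G.Dart, Paper.faceSize E d0 = 6 →
      (Function.Injective fun i : Fin 6 => Paper.boundaryVert E d0 i) ∨
      (∃ k : ℕ, Paper.boundaryVert E d0 k = Paper.boundaryVert E d0 (k + 3) ∧
        [Paper.boundaryVert E d0 k, Paper.boundaryVert E d0 (k + 1),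
         Paper.boundaryVert E d0 (k + 2), Paper.boundaryVert E d0 (k + 4),
         Paper.boundaryVert E d0 (k + 5)].Nodup) :=
  statement8_general G E hmin
end

section
/- Let G be a connected plane graph with minimum degree at least 3 that contains no cycle of length 4, no cycle of length 7, no cycle of length 9, and no 5-cycle normally adjacent to a 3-cycle. Then no 5-face of G is adjacent to a 6-face of G. -/
/-!
Let the 5-face and the 6-face share the edge `c₀c₁`, with boundary walks `c₀ … c₄` and
`g₀ … g₅`, where `g₀ = c₁` and `g₁ = c₀`. As every vertex has degree at least three, the rotation
at a vertex has no cycle of length at most two. Therefore no face boundary turns back along an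
edge, and no two faces run through a path `x → y → z` in opposite directions. So the 5-walk is a
5-cycle, and the 6-walk is either a 6-cycle or two triangles sharing a vertex.

With no 4-cycle the pentagon has no chord. The hexagon has none either: a long chord closes a
4-cycle, and a short one cuts off a triangle normally adjacent to a 5-cycle. In the two-triangle
case, the triangle on `c₀c₁` is normally adjacent to the pentagon. In the 6-cycle case, `c₂` and
`c₄` cannot lie on the hexagon: they would give a chord, or a path traversed backwards by the
other face. If `c₃` lay on it, there would be a chord of the pentagon or a 4-cycle. So the two
cycles meet exactly in `c₀c₁`, and the rest of their union is a 9-cycle.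
-/

open Function

theorem ZMod.injective_of_ne_add_one_of_ne_add_two {α : Type*} {v : ZMod 5 → α}
    (h₁ : ∀ i, v i ≠ v (i + 1)) (h₂ : ∀ i, v i ≠ v (i + 2)) : Injective v := by
  intro i j hij
  obtain ⟨k, rfl⟩ : ∃ k, j = i + k := ⟨j - i, by ring⟩
  have hk : ∀ k : ZMod 5, k = 0 ∨ k = 1 ∨ k = 2 ∨ k = 3 ∨ k = 4 := by decide
  rcases hk k with rfl | rfl | rfl | rfl | rfl
  · simp
  · exact absurd hij (h₁ i)
  · exact absurd hij (h₂ i)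
  · have := h₂ (i + 3)
    rw [add_assoc, show (3 + 2 : ZMod 5) = 0 by decide, add_zero] at this
    exact absurd hij.symm this
  · have := h₁ (i + 4)
    rw [add_assoc, show (4 + 1 : ZMod 5) = 0 by decide, add_zero] at this
    exact absurd hij.symm this

theorem ZMod.injective_or_exists_eq_add_three {α : Type*} {v : ZMod 6 → α}
    (h₁ : ∀ i, v i ≠ v (i + 1)) (h₂ : ∀ i, v i ≠ v (i + 2)) :
    Injective v ∨ ∃ i, v i = v (i + 3) := by
  refine or_iff_not_imp_right.mpr fun h₃ i j hij => ?_
  obtain ⟨k, rfl⟩ : ∃ k, j = i + k := ⟨j - i, by ring⟩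
  have hk : ∀ k : ZMod 6, k = 0 ∨ k = 1 ∨ k = 2 ∨ k = 3 ∨ k = 4 ∨ k = 5 := by decide
  rcases hk k with rfl | rfl | rfl | rfl | rfl | rfl
  · simp
  · exact absurd hij (h₁ i)
  · exact absurd hij (h₂ i)
  · exact absurd ⟨i, hij⟩ h₃
  · have := h₂ (i + 4)
    rw [add_assoc, show (4 + 2 : ZMod 6) = 0 by decide, add_zero] at this
    exact absurd hij.symm this
  · have := h₁ (i + 5)
    rw [add_assoc, show (5 + 1 : ZMod 6) = 0 by decide, add_zero] at this
    exact absurd hij.symm this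

namespace Paper

open SimpleGraph

variable {V : Type*} {G : SimpleGraph V}

theorem exists_isCycle_of_isChain {u : V} {l : List V} (hl : 2 ≤ l.length)
    (hnd : (u :: l).Nodup) (hch : (u :: l ++ [u]).IsChain G.Adj) :
    ∃ w : G.Walk u u, w.IsCycle ∧ w.support = u :: l ++ [u] := by
  let w : G.Walk u u :=
    (Walk.ofSupport (u :: l ++ [u]) (List.cons_ne_nil _ _) hch).copy rfl (by simp)
  have hsupp : w.support = u :: l ++ [u] :=
    (Walk.support_copy _ _ _).trans (Walk.support_ofSupport _ _)
  refine ⟨w, ?_, hsupp⟩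
  have hnil : ¬ w.Nil := by
    rw [Walk.nil_iff_support_eq, hsupp]; simp
  rw [Walk.isCycle_iff_isPath_tail_and_le_length, Walk.isPath_def,
    Walk.support_tail_of_not_nil _ hnil, hsupp]
  refine ⟨?_, ?_⟩
  · simp only [List.cons_append, List.tail_cons, List.nodup_append, List.nodup_singleton]
    grind
  · have := w.length_support
    rw [hsupp] at this
    simp only [List.cons_append, List.length_cons, List.length_append, List.length_nil] at this
    omega

theorem NoCycleLen.false_of_isChain {n : ℕ} (h : NoCycleLen G n) {u : V} {l : List V}
    (hn : l.length + 1 = n) (hl : 2 ≤ l.length) (hnd : (u :: l).Nodup)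
    (hch : (u :: l ++ [u]).IsChain G.Adj) : False := by
  obtain ⟨w, hw, hsupp⟩ := exists_isCycle_of_isChain hl hnd hch
  refine h u w hw ?_
  rw [← hn, ← Nat.add_one_inj, ← Walk.length_support, hsupp]
  simp

theorem NoCycleLen.false_of_adj4 (h : NoCycleLen G 4) {u v w x : V} (huv : G.Adj u v)
    (hvw : G.Adj v w) (hwx : G.Adj w x) (hxu : G.Adj x u) (huw : u ≠ w) (hvx : v ≠ x) :
    False :=
  h.false_of_isChain (u := u) (l := [v, w, x]) rfl (by simp)
    (by simp [huv.ne, huw, hxu.ne.symm, hvw.ne, hvx, hwx.ne]) (by simp [huv, hvw, hwx, hxu])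

theorem No5CycleNormAdj3.false_of_adj (h : No5CycleNormAdj3 G) {x y p q r s : V}
    (hxy : G.Adj x y) (hyp : G.Adj y p) (hpq : G.Adj p q) (hqr : G.Adj q r) (hrx : G.Adj r x)
    (hnd : [x, y, p, q, r].Nodup) (hsx : G.Adj s x) (hsy : G.Adj s y)
    (hsp : s ≠ p) (hsq : s ≠ q) (hsr : s ≠ r) : False := by
  obtain ⟨w₅, hw₅, hsupp₅⟩ := exists_isCycle_of_isChain (G := G) (u := x) (l := [y, p, q, r])
    (by simp) hnd (by simp [hxy, hyp, hpq, hqr, hrx])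
  obtain ⟨w₃, hw₃, hsupp₃⟩ := exists_isCycle_of_isChain (G := G) (u := x) (l := [y, s])
    (by simp) (by simp [hxy.ne, hsx.ne.symm, hsy.ne.symm]) (by simp [hxy, hsy.symm, hsx])
  refine h x x w₅ w₃ hw₅ ?_ hw₃ ?_ ⟨x, y, hxy.ne, ?_, ?_, fun z => ?_⟩
  · rw [← Nat.add_one_inj, ← Walk.length_support, hsupp₅]; simp
  · rw [← Nat.add_one_inj, ← Walk.length_support, hsupp₃]; simp
  · simp [Walk.edges_eq_zipWith_support, hsupp₅]
  · simp [Walk.edges_eq_zipWith_support, hsupp₃]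
  · rw [hsupp₅, hsupp₃]
    simp only [List.cons_append, List.nil_append, List.mem_cons, List.not_mem_nil, or_false]
    grind

theorem adj_of_eq_add_one {n : ℕ} {c : ZMod n → V} (hadj : ∀ i, G.Adj (c i) (c (i + 1)))
    {i j : ZMod n} (h : j = i + 1) : G.Adj (c i) (c j) :=
  h ▸ hadj i

section Pentagon

variable {c : ZMod 5 → V} (hc : Injective c) (hadj : ∀ i, G.Adj (c i) (c (i + 1)))
include hc hadj

theorem NoCycleLen.not_adj_add_two_of_pentagon (h4 : NoCycleLen G 4) (i : ZMod 5) :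
    ¬ G.Adj (c i) (c (i + 2)) := fun h =>
  h4.false_of_adj4 (w := c (i + 3)) (x := c (i + 4)) h (adj_of_eq_add_one hadj (by ring))
    (adj_of_eq_add_one hadj (by ring)) (adj_of_eq_add_one hadj (by grind))
    (hc.ne (by grind)) (hc.ne (by grind))

theorem NoCycleLen.eq_add_one_or_of_adj_pentagon (h4 : NoCycleLen G 4) {i j : ZMod 5}
    (h : G.Adj (c i) (c j)) : j = i + 1 ∨ i = j + 1 := by
  obtain ⟨k, rfl⟩ : ∃ k, j = i + k := ⟨j - i, by ring⟩
  have hk : ∀ k : ZMod 5, k = 0 ∨ k = 1 ∨ k = 2 ∨ k = 3 ∨ k = 4 := by decide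
  rcases hk k with rfl | rfl | rfl | rfl | rfl
  · simp at h
  · grind
  · exact absurd h (h4.not_adj_add_two_of_pentagon hc hadj i)
  · refine absurd h.symm ?_
    convert h4.not_adj_add_two_of_pentagon hc hadj (i + 3) using 3
    grind
  · grind

end Pentagon

section Hexagon

variable {g : ZMod 6 → V} (hg : Injective g) (hadj : ∀ i, G.Adj (g i) (g (i + 1)))
include hg hadj

theorem NoCycleLen.not_adj_add_three_of_hexagon (h4 : NoCycleLen G 4) (i : ZMod 6) :
    ¬ G.Adj (g i) (g (i + 3)) := fun h =>
  h4.false_of_adj4 (v := g (i + 1)) (w := g (i + 2)) (hadj i) (adj_of_eq_add_one hadj (by ring))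
    (adj_of_eq_add_one hadj (by ring)) h.symm (hg.ne (by grind)) (hg.ne (by grind))

theorem No5CycleNormAdj3.not_adj_add_two_of_hexagon (h53 : No5CycleNormAdj3 G) (i : ZMod 6) :
    ¬ G.Adj (g i) (g (i + 2)) := fun h =>
  h53.false_of_adj (p := g (i + 3)) (q := g (i + 4)) (r := g (i + 5)) (s := g (i + 1)) h
    (adj_of_eq_add_one hadj (by ring)) (adj_of_eq_add_one hadj (by ring))
    (adj_of_eq_add_one hadj (by ring)) (adj_of_eq_add_one hadj (by grind))
    (by simp only [List.nodup_cons, List.mem_cons, hg.eq_iff]; grind) (hadj i).symm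
    (adj_of_eq_add_one hadj (by ring)) (hg.ne (by grind)) (hg.ne (by grind)) (hg.ne (by grind))

theorem eq_add_one_or_of_adj_hexagon (h4 : NoCycleLen G 4) (h53 : No5CycleNormAdj3 G)
    {i j : ZMod 6} (h : G.Adj (g i) (g j)) : j = i + 1 ∨ i = j + 1 := by
  obtain ⟨k, rfl⟩ : ∃ k, j = i + k := ⟨j - i, by ring⟩
  have hk : ∀ k : ZMod 6, k = 0 ∨ k = 1 ∨ k = 2 ∨ k = 3 ∨ k = 4 ∨ k = 5 := by decide
  rcases hk k with rfl | rfl | rfl | rfl | rfl | rfl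
  · simp at h
  · grind
  · exact absurd h (h53.not_adj_add_two_of_hexagon hg hadj i)
  · exact absurd h (h4.not_adj_add_three_of_hexagon hg hadj i)
  · refine absurd h.symm ?_
    convert h53.not_adj_add_two_of_hexagon hg hadj (i + 4) using 3
    grind
  · grind

end Hexagon

theorem exists_adj_adj_of_eq_add_three {g : ZMod 6 → V} (hadj : ∀ i, G.Adj (g i) (g (i + 1)))
    {i : ZMod 6} (h : g i = g (i + 3)) : ∃ s, G.Adj s (g 0) ∧ G.Adj s (g 1) := by
  have g12 : G.Adj (g 1) (g 2) := hadj 1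
  have g23 : G.Adj (g 2) (g 3) := hadj 2
  have g45 : G.Adj (g 4) (g 5) := hadj 4
  have g50 : G.Adj (g 5) (g 0) := hadj 5
  have hk : ∀ k : ZMod 6, k = 0 ∨ k = 1 ∨ k = 2 ∨ k = 3 ∨ k = 4 ∨ k = 5 := by decide
  rcases hk i with rfl | rfl | rfl | rfl | rfl | rfl
  · exact ⟨g 2, h ▸ g23, g12.symm⟩
  · exact ⟨g 5, g50, h ▸ g45.symm⟩
  · exact ⟨g 2, h ▸ g50, g12.symm⟩
  · exact ⟨g 2, (h.symm ▸ g23 :), g12.symm⟩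
  · exact ⟨g 5, g50, (h.symm ▸ g45.symm :)⟩
  · exact ⟨g 2, (h.symm ▸ g50 :), g12.symm⟩

theorem false_of_pentagon_triangle (h4 : NoCycleLen G 4) (h53 : No5CycleNormAdj3 G)
    {c : ZMod 5 → V} (hc : Injective c) (hcadj : ∀ i, G.Adj (c i) (c (i + 1))) {s : V}
    (hs₀ : G.Adj s (c 0)) (hs₁ : G.Adj s (c 1)) : False := by
  have chord {i j : ZMod 5} : G.Adj (c i) (c j) → j = i + 1 ∨ i = j + 1 :=
    h4.eq_add_one_or_of_adj_pentagon hc hcadj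
  refine h53.false_of_adj (hcadj 0) (hcadj 1) (hcadj 2) (hcadj 3) (hcadj 4)
    (by simp +decide [hc.eq_iff]) hs₀ hs₁ ?_ ?_ ?_
  · rintro rfl; exact absurd (chord hs₀) (by decide)
  · rintro rfl; exact absurd (chord hs₀) (by decide)
  · rintro rfl; exact absurd (chord hs₁) (by decide)
theorem false_of_pentagon_hexagon (h4 : NoCycleLen G 4) (h9 : NoCycleLen G 9)
    (h53 : No5CycleNormAdj3 G) {c : ZMod 5 → V} {g : ZMod 6 → V} (hc : Injective c)
    (hg : Injective g) (hcadj : ∀ i, G.Adj (c i) (c (i + 1)))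
    (hgadj : ∀ i, G.Adj (g i) (g (i + 1))) (hcg₀ : c 0 = g 1) (hcg₁ : c 1 = g 0)
    (hcg₂ : c 2 ≠ g 5) (hcg₄ : c 4 ≠ g 2) : False := by
  have c12 : G.Adj (c 1) (c 2) := adj_of_eq_add_one hcadj (by decide)
  have c23 : G.Adj (c 2) (c 3) := adj_of_eq_add_one hcadj (by decide)
  have c34 : G.Adj (c 3) (c 4) := adj_of_eq_add_one hcadj (by decide)
  have c40 : G.Adj (c 4) (c 0) := adj_of_eq_add_one hcadj (by decide)
  have hc₂ : ∀ j, c 2 ≠ g j := by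
    intro j hj
    rw [hj, hcg₁] at c12
    rcases eq_add_one_or_of_adj_hexagon hg hgadj h4 h53 c12 with rfl | h
    · exact hc.ne (by decide) (hj.trans hcg₀.symm)
    · exact hcg₂ (hj.trans (congrArg g (by grind)))
  have hc₄ : ∀ j, c 4 ≠ g j := by
    intro j hj
    rw [hj, hcg₀] at c40
    rcases eq_add_one_or_of_adj_hexagon hg hgadj h4 h53 c40.symm with rfl | h
    · exact hcg₄ (hj.trans (congrArg g (by decide)))
    · exact hc.ne (by decide) (hj.trans (hcg₁.trans (congrArg g (by grind))).symm)
  have hc₃ : ∀ j, c 3 ≠ g j := by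
    intro j hj
    have hk : ∀ k : ZMod 6, k = 0 ∨ k = 1 ∨ k = 2 ∨ k = 3 ∨ k = 4 ∨ k = 5 := by decide
    rcases hk j with rfl | rfl | rfl | rfl | rfl | rfl
    · exact hc.ne (by decide) (hj.trans hcg₁.symm)
    · exact hc.ne (by decide) (hj.trans hcg₀.symm)
    · have h30 : G.Adj (c 3) (c 0) := hcg₀ ▸ hj ▸ (hgadj 1).symm
      exact absurd (h4.eq_add_one_or_of_adj_pentagon hc hcadj h30) (by decide)
    · exact h4.false_of_adj4 (hcg₀ ▸ hgadj 1) (hj ▸ hgadj 2) c34 c40 (hc.ne (by decide))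
        (hc₄ 2).symm
    · exact h4.false_of_adj4 (hcg₁ ▸ (hgadj 5).symm) (hj ▸ (hgadj 4).symm) c23.symm c12.symm
        (hc.ne (by decide)) (hc₂ 5).symm
    · have h31 : G.Adj (c 3) (c 1) := hcg₁ ▸ hj ▸ (hgadj 5)
      exact absurd (h4.eq_add_one_or_of_adj_pentagon hc hcadj h31) (by decide)
  refine h9.false_of_isChain (u := g 0) (l := [c 2, c 3, c 4, g 1, g 2, g 3, g 4, g 5]) rfl
    (by simp) ?_ ?_
  · simp +decide [hc.eq_iff, hg.eq_iff, hc₂, hc₃, hc₄, fun j => (hc₂ j).symm,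
      fun j => (hc₃ j).symm, fun j => (hc₄ j).symm]
  · simp only [List.cons_append, List.nil_append, List.isChain_cons_cons, List.IsChain.singleton,
      and_true]
    exact ⟨hcg₁ ▸ c12, c23, c34, hcg₀ ▸ c40, hgadj 1, hgadj 2, hgadj 3, hgadj 4, hgadj 5⟩

namespace PlaneEmbedding

variable (E : PlaneEmbedding G)

theorem facePerm_apply (d : G.Dart) : E.facePerm d = E.rot d.symm := rfl

theorem fst_facePerm (d : G.Dart) : (E.facePerm d).fst = d.snd :=
  E.fst_rot d.symm

theorem facePerm_ne_self (d : G.Dart) : E.facePerm d ≠ d := fun h =>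
  d.fst_ne_snd (by simpa [h] using E.fst_facePerm d)

theorem faceSize_congr {d e : G.Dart} (h : E.facePerm.SameCycle d e) :
    faceSize E d = faceSize E e := by
  have : faceOf E d = faceOf E e := Set.ext fun _ => ⟨h.symm.trans, h.trans⟩
  rw [faceSize, faceSize, this]

variable [Fintype V] [DecidableRel G.Adj]

theorem rot_rot_ne (d : G.Dart) (hd : 3 ≤ G.degree d.fst) : E.rot (E.rot d) ≠ d := by
  classical
  intro hrr
  have horbit : ∀ i : ℕ, (E.rot ^ i) d = d ∨ (E.rot ^ i) d = E.rot d := by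
    intro i
    induction i with
    | zero => simp
    | succ i ih => rcases ih with h | h <;> simp [pow_succ', h, hrr]
  have hsub : G.neighborFinset d.fst ⊆ {d.snd, (E.rot d).snd} := by
    intro w hw
    rw [mem_neighborFinset] at hw
    obtain ⟨i, hi⟩ := (E.rot_cyclic d ⟨(d.fst, w), hw⟩ rfl).exists_nat_pow_eq
    have hwi : w = ((E.rot ^ i) d).snd := by rw [hi]
    rcases horbit i with h | h <;> simp [hwi, h]
  have := (Finset.card_le_card hsub).trans Finset.card_le_two
  rw [card_neighborFinset_eq_degree] at this
  omega

theorem facePerm_symm_ne {x y : G.Dart} (hxy : E.facePerm x = y) (hy : 3 ≤ G.degree y.fst) :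
    E.facePerm y.symm ≠ x.symm := by
  intro h
  rw [facePerm_apply, Dart.symm_symm] at h
  refine E.rot_rot_ne x.symm ?_ (by rw [← facePerm_apply, hxy, h])
  rwa [← hxy, fst_facePerm] at hy

theorem pow_mod_faceSize_apply (d : G.Dart) (i : ℕ) :
    (E.facePerm ^ (i % faceSize E d)) d = (E.facePerm ^ i) d := by
  classical
  have : faceSize E d = (E.facePerm.cycleOf d).support.card := by
    rw [faceSize, ← Set.ncard_coe_finset]
    congr
    ext e
    simp [faceOf, Equiv.Perm.mem_support_cycleOf_iff' (E.facePerm_ne_self d)]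
  rw [this]
  exact Equiv.Perm.pow_mod_card_support_cycleOf_self_apply _ _ _

theorem exists_faceTraversal {n : ℕ} [NeZero n] (d : G.Dart) (hd : faceSize E d = n) :
    ∃ (v : ZMod n → V) (D : ZMod n → G.Dart), D 0 = d ∧ FaceTraversal E v D := by
  have hstep : ∀ i : ZMod n,
      E.facePerm ((E.facePerm ^ i.val) d) = (E.facePerm ^ (i + 1).val) d := by
    intro i
    rw [← Equiv.Perm.mul_apply, ← pow_succ', ← E.pow_mod_faceSize_apply, hd, ZMod.val_add,
      ZMod.val_one_eq_one_mod, Nat.add_mod_mod]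
  refine ⟨fun i => ((E.facePerm ^ i.val) d).fst, fun i => (E.facePerm ^ i.val) d, by simp,
    fun i => Prod.ext rfl ?_, hstep⟩
  change ((E.facePerm ^ i.val) d).snd = ((E.facePerm ^ (i + 1).val) d).fst
  rw [← hstep, fst_facePerm]

end PlaneEmbedding

namespace FaceTraversal

variable {E : PlaneEmbedding G} {n : ℕ} {v : ZMod n → V} {D : ZMod n → G.Dart}

theorem adj (h : FaceTraversal E v D) (i : ZMod n) : G.Adj (v i) (v (i + 1)) := by
  have := (D i).adj
  rwa [h.1 i] at this

variable [Fintype V] [DecidableRel G.Adj]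

theorem ne_add_two (h : FaceTraversal E v D) (hmin : ∀ u, 3 ≤ G.degree u) (i : ZMod n) :
    v i ≠ v (i + 2) := by
  intro hv
  have hback : D (i + 1) = (D i).symm := by
    ext
    · simp [Dart.symm, h.1]
    · simp [Dart.symm, h.1, hv, add_assoc, one_add_one_eq_two]
  refine E.facePerm_symm_ne (h.2 i) (hmin _) ?_
  rw [hback, Dart.symm_symm, ← hback, h.2]

theorem ne_of_reverse {m : ℕ} {w : ZMod m → V} {D' : ZMod m → G.Dart}
    (hv : FaceTraversal E v D) (hw : FaceTraversal E w D') (hmin : ∀ u, 3 ≤ G.degree u)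
    {a : ZMod m} {b : ZMod n} (h₀ : v b = w (a + 1 + 1)) (h₁ : v (b + 1) = w (a + 1)) :
    v (b + 1 + 1) ≠ w a := by
  intro h₂
  refine E.facePerm_symm_ne (hw.2 a) (hmin _) ?_
  have e₁ : (D' (a + 1)).symm = D b := by ext <;> simp [Dart.symm, hv.1, hw.1, h₀, h₁]
  have e₂ : D (b + 1) = (D' a).symm := by ext <;> simp [Dart.symm, hv.1, hw.1, h₁, h₂]
  rw [e₁, hv.2, e₂]

end FaceTraversal

variable [Fintype V] [DecidableRel G.Adj] (E : PlaneEmbedding G)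

theorem FacesAdjacent.exists_faceTraversal {m n : ℕ} [NeZero m] [NeZero n] (hmn : m ≠ n)
    {d₁ d₂ : G.Dart} (h : FacesAdjacent E d₁ d₂) (h₁ : faceSize E d₁ = m)
    (h₂ : faceSize E d₂ = n) :
    ∃ (c : ZMod m → V) (Dc : ZMod m → G.Dart) (g : ZMod n → V) (Dg : ZMod n → G.Dart),
      FaceTraversal E c Dc ∧ FaceTraversal E g Dg ∧ c 0 = g 1 ∧ c 1 = g 0 := by
  obtain ⟨e₁, e₂, hs₁, hs₂, he⟩ := h
  rw [E.faceSize_congr hs₁] at h₁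
  rw [E.faceSize_congr hs₂] at h₂
  rcases (dart_edge_eq_iff e₁ e₂).mp he with rfl | rfl
  · exact absurd (h₁.symm.trans h₂) hmn
  obtain ⟨c, Dc, hDc, hc⟩ := E.exists_faceTraversal _ h₁
  obtain ⟨g, Dg, hDg, hg⟩ := E.exists_faceTraversal _ h₂
  have hc₀ := hc.1 0
  have hg₀ := hg.1 0
  rw [hDc, zero_add] at hc₀
  rw [hDg, zero_add] at hg₀
  exact ⟨c, Dc, g, Dg, hc, hg, (congrArg Prod.fst hc₀).symm.trans (congrArg Prod.snd hg₀),
    (congrArg Prod.snd hc₀).symm.trans (congrArg Prod.fst hg₀)⟩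

end Paper

open SimpleGraph

theorem statement9_general {V : Type*} [Fintype V] (G : SimpleGraph V) [DecidableRel G.Adj]
    (E : Paper.PlaneEmbedding G)
    (hmin : ∀ v : V, 3 ≤ G.degree v)
    (h4 : Paper.NoCycleLen G 4)
    (h9 : Paper.NoCycleLen G 9) (h53 : Paper.No5CycleNormAdj3 G) :
    ∀ d1 d2 : G.Dart, Paper.faceSize E d1 = 5 → Paper.faceSize E d2 = 6 →
      ¬ Paper.FacesAdjacent E d1 d2 := by
  intro d₁ d₂ h₁ h₂ hadj
  obtain ⟨c, Dc, g, Dg, hc, hg, hcg₀, hcg₁⟩ := hadj.exists_faceTraversal E (by norm_num) h₁ h₂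
  have hcinj := ZMod.injective_of_ne_add_one_of_ne_add_two (fun i => (hc.adj i).ne)
    (hc.ne_add_two hmin)
  rcases ZMod.injective_or_exists_eq_add_three (fun i => (hg.adj i).ne)
    (hg.ne_add_two hmin) with hginj | ⟨i, hi⟩
  · exact Paper.false_of_pentagon_hexagon h4 h9 h53 hcinj hginj hc.adj hg.adj hcg₀ hcg₁
      (hc.ne_of_reverse hg hmin (a := 5) (b := 0) hcg₀ hcg₁)
      (hg.ne_of_reverse hc hmin (a := 4) (b := 0) hcg₁.symm hcg₀.symm).symm
  · obtain ⟨s, hs₀, hs₁⟩ := Paper.exists_adj_adj_of_eq_add_three hg.adj hi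
    exact Paper.false_of_pentagon_triangle h4 h53 hcinj hc.adj (by rwa [hcg₀]) (by rwa [hcg₁])

/-- No 5-face is adjacent to a 6-face. -/
theorem statement9 {V : Type*} [Fintype V] (G : SimpleGraph V) [DecidableRel G.Adj]
    (hconn : G.Connected)
    (E : Paper.PlaneEmbedding G) (hE : E.IsPlane)
    (hmin : ∀ v : V, 3 ≤ G.degree v)
    (h4 : Paper.NoCycleLen G 4) (h7 : Paper.NoCycleLen G 7)
    (h9 : Paper.NoCycleLen G 9) (h53 : Paper.No5CycleNormAdj3 G) :
    ∀ d1 d2 : G.Dart, Paper.faceSize E d1 = 5 → Paper.faceSize E d2 = 6 →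
      ¬ Paper.FacesAdjacent E d1 d2 :=
  statement9_general G E hmin h4 h9 h53
end
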